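/- arXiv:2104.03186 — 4 statements merged into one kernel-verified Lean document; each statement's English description precedes it below -/
import Mathlib

section
/- If elements are initialized as a_k = V_{k→k+1} (one-step conditional value functions, with a_T set to the terminal value function viewed as depending only on its first argument), then the right-fold a_k ⊗ a_{k+1} ⊗ ⋯ ⊗ a_T equals the value function V_k, and the left-fold a_S ⊗ ⋯ ⊗ a_{k-1} equals V_{S→k}. -/
open scoped ENNReal

/-- The state trajectory starting from `x` at time `k` under controls `u`. -/
def traj {X U : Type*} (f : ℕ → X → U → X) (u : ℕ → U) (k : ℕ) (x : X) : ℕ → X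
  | 0 => x
  | n + 1 => f (k + n) (traj f u k x n) (u (k + n))

/-- Accumulated stage cost `∑_{n=k}^{i-1} ℓ_n(x_n, u_n)`. -/
noncomputable def runCost {X U : Type*} (f : ℕ → X → U → X) (ℓ : ℕ → X → U → ℝ≥0∞)
    (u : ℕ → U) (k i : ℕ) (x : X) : ℝ≥0∞ :=
  ∑ n ∈ Finset.range (i - k), ℓ (k + n) (traj f u k x n) (u (k + n))

open Classical in
/-- Conditional value function `V_{k→i}(x, y)` (`⊤` if infeasible). -/
noncomputable def condV {X U : Type*} (f : ℕ → X → U → X) (ℓ : ℕ → X → U → ℝ≥0∞)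
    (k i : ℕ) (x y : X) : ℝ≥0∞ :=
  ⨅ u : ℕ → U, if traj f u k x (i - k) = y then runCost f ℓ u k i x else ⊤

/-- Value function `V_k(x)`. -/
noncomputable def Vval {X U : Type*} (f : ℕ → X → U → X) (ℓ : ℕ → X → U → ℝ≥0∞)
    (ℓT : X → ℝ≥0∞) (T k : ℕ) (x : X) : ℝ≥0∞ :=
  ⨅ u : ℕ → U, runCost f ℓ u k T x + ℓT (traj f u k x (T - k))

/-- Combination operator `(V_a ⊗ V_b)(x,y) = min_z [V_a(x,z) + V_b(z,y)]`. -/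
noncomputable def dpOp {X : Type*} (a b : X → X → ℝ≥0∞) : X → X → ℝ≥0∞ :=
  fun x y => ⨅ z : X, a x z + b z y

open Classical in
/-- Initialization of elements: `a_k = V_{k→k+1}` for `k < T`, and `a_T` is the
terminal value function `V_T` viewed as a function of its first argument only. -/
noncomputable def elem {X U : Type*} (f : ℕ → X → U → X) (ℓ : ℕ → X → U → ℝ≥0∞)
    (ℓT : X → ℝ≥0∞) (T k : ℕ) : X → X → ℝ≥0∞ :=
  if k = T then fun x _ => Vval f ℓ ℓT T T x else condV f ℓ k (k + 1)

/-- Right fold `rfold n = a_{T-n} ⊗ a_{T-n+1} ⊗ ⋯ ⊗ a_T`. -/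
noncomputable def rfold {X U : Type*} (f : ℕ → X → U → X) (ℓ : ℕ → X → U → ℝ≥0∞)
    (ℓT : X → ℝ≥0∞) (T : ℕ) : ℕ → X → X → ℝ≥0∞
  | 0 => elem f ℓ ℓT T T
  | n + 1 => dpOp (elem f ℓ ℓT T (T - (n + 1))) (rfold f ℓ ℓT T n)

/-- Left fold `lfold n = a_S ⊗ a_{S+1} ⊗ ⋯ ⊗ a_{S+n}`. -/
noncomputable def lfold {X U : Type*} (f : ℕ → X → U → X) (ℓ : ℕ → X → U → ℝ≥0∞)
    (ℓT : X → ℝ≥0∞) (T S : ℕ) : ℕ → X → X → ℝ≥0∞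
  | 0 => elem f ℓ ℓT T S
  | n + 1 => dpOp (lfold f ℓ ℓT T S n) (elem f ℓ ℓT T (S + (n + 1)))

section helpers
open Classical

variable {X U : Type*} (f : ℕ → X → U → X) (ℓ : ℕ → X → U → ℝ≥0∞)

lemma traj_congr {u v : ℕ → U} {k : ℕ} {x : X} {n : ℕ}
    (h : ∀ m < n, u (k + m) = v (k + m)) : traj f u k x n = traj f v k x n := by
  induction n with
  | zero => rfl
  | succ n ih =>
    simp only [traj, ih fun m hm => h m (by omega), h n (by omega)]

lemma runCost_congr {u v : ℕ → U} {k i : ℕ} {x : X}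
    (h : ∀ m, k + m < i → u (k + m) = v (k + m)) :
    runCost f ℓ u k i x = runCost f ℓ v k i x := by
  unfold runCost
  refine Finset.sum_congr rfl fun n hn => ?_
  simp only [Finset.mem_range] at hn
  rw [traj_congr f fun m hm => h m (by omega), h n (by omega)]

lemma traj_shift (u : ℕ → U) (k : ℕ) (x : X) (n : ℕ) :
    traj f u k x (n + 1) = traj f u (k + 1) (f k x (u k)) n := by
  induction n with
  | zero => simp [traj]
  | succ n ih =>
    have e : k + (n + 1) = k + 1 + n := by omega
    show f (k + (n + 1)) (traj f u k x (n + 1)) (u (k + (n + 1))) = _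
    rw [e, ih]; rfl

lemma runCost_split_front (u : ℕ → U) {k i : ℕ} (h : k < i) (x : X) :
    runCost f ℓ u k i x = ℓ k x (u k) + runCost f ℓ u (k + 1) i (f k x (u k)) := by
  unfold runCost
  have h1 : i - k = (i - (k + 1)) + 1 := by omega
  rw [h1, Finset.sum_range_succ', add_comm]
  congr 1
  refine Finset.sum_congr rfl fun n hn => ?_
  have e : k + (n + 1) = k + 1 + n := by omega
  rw [traj_shift, e]

lemma runCost_split_back (u : ℕ → U) {k i : ℕ} (h : k ≤ i) (x : X) :
    runCost f ℓ u k (i + 1) x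
      = runCost f ℓ u k i x + ℓ i (traj f u k x (i - k)) (u i) := by
  unfold runCost
  have h1 : i + 1 - k = (i - k) + 1 := by omega
  have e : k + (i - k) = i := by omega
  rw [h1, Finset.sum_range_succ, e]

variable [Nonempty U]

lemma condV_le (k i : ℕ) (x : X) (u : ℕ → U) :
    condV f ℓ k i x (traj f u k x (i - k)) ≤ runCost f ℓ u k i x := by
  unfold condV
  exact iInf_le_of_le u (by rw [if_pos rfl])

lemma condV_onestep (k : ℕ) (x z : X) :
    condV f ℓ k (k + 1) x z
      = ⨅ u : ℕ → U, if f k x (u k) = z then ℓ k x (u k) else ⊤ := by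
  unfold condV
  refine iInf_congr fun u => ?_
  have h1 : k + 1 - k = 1 := by omega
  rw [h1]
  simp [traj, runCost, h1]

lemma Vval_T (ℓT : X → ℝ≥0∞) (T : ℕ) (x : X) : Vval f ℓ ℓT T T x = ℓT x := by
  unfold Vval
  simp [runCost, traj, Nat.sub_self]

lemma Vval_bellman (ℓT : X → ℝ≥0∞) {T k : ℕ} (h : k < T) (x : X) :
    Vval f ℓ ℓT T k x
      = ⨅ z : X, condV f ℓ k (k + 1) x z + Vval f ℓ ℓT T (k + 1) z := by
  have ht : T - k = (T - (k + 1)) + 1 := by omega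
  apply le_antisymm
  · refine le_iInf fun z => ?_
    rw [condV_onestep, ENNReal.iInf_add]
    refine le_iInf fun u => ?_
    unfold Vval
    rw [ENNReal.add_iInf]
    refine le_iInf fun v => ?_
    by_cases hc : f k x (u k) = z
    · rw [if_pos hc]
      set w : ℕ → U := Function.update v k (u k) with hw
      have hwk : w k = u k := by simp [hw]
      have hwm : ∀ m, w (k + 1 + m) = v (k + 1 + m) := fun m =>
        Function.update_of_ne (by omega) _ _
      refine iInf_le_of_le w ?_
      rw [runCost_split_front f ℓ w h x, ht, traj_shift, hwk, hc]
      have h1 : runCost f ℓ w (k + 1) T z = runCost f ℓ v (k + 1) T z :=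
        runCost_congr f ℓ fun m _ => hwm m
      have h2 : traj f w (k + 1) z (T - (k + 1)) = traj f v (k + 1) z (T - (k + 1)) :=
        traj_congr f fun m _ => hwm m
      rw [h1, h2, add_assoc]
    · simp [hc]
  · unfold Vval
    refine le_iInf fun u => ?_
    refine iInf_le_of_le (f k x (u k)) ?_
    rw [runCost_split_front f ℓ u h x, ht, traj_shift, add_assoc]
    refine add_le_add ?_ ?_
    · rw [condV_onestep]
      exact iInf_le_of_le u (by simp)
    · exact iInf_le _ u

lemma condV_split_back {k i : ℕ} (h : k ≤ i) (x y : X) :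
    condV f ℓ k (i + 1) x y
      = ⨅ z : X, condV f ℓ k i x z + condV f ℓ i (i + 1) z y := by
  have h1 : i + 1 - k = (i - k) + 1 := by omega
  have e : k + (i - k) = i := by omega
  apply le_antisymm
  · refine le_iInf fun z => ?_
    rw [condV_onestep]
    unfold condV
    rw [ENNReal.iInf_add]
    refine le_iInf fun u => ?_
    rw [ENNReal.add_iInf]
    refine le_iInf fun v => ?_
    by_cases hu : traj f u k x (i - k) = z
    · by_cases hv : f i z (v i) = y
      · rw [if_pos hu, if_pos hv]
        set w : ℕ → U := Function.update u i (v i) with hw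
        have hwi : w i = v i := by simp [hw]
        have hwm : ∀ m, k + m < i → w (k + m) = u (k + m) := fun m hm =>
          Function.update_of_ne (by omega) _ _
        have htr : traj f w k x (i - k) = traj f u k x (i - k) :=
          traj_congr f fun m hm => hwm m (by omega)
        have hrc : runCost f ℓ w k i x = runCost f ℓ u k i x :=
          runCost_congr f ℓ hwm
        refine iInf_le_of_le w ?_
        have h2 : traj f w k x ((i - k) + 1) = y := by
          show f (k + (i - k)) (traj f w k x (i - k)) (w (k + (i - k))) = y
          rw [e, htr, hu, hwi, hv]
        rw [h1, if_pos h2, runCost_split_back f ℓ w h x, hrc, htr, hu, hwi]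
      · simp [hv]
    · simp [hu]
  · show _ ≤ ⨅ u : ℕ → U,
        if traj f u k x (i + 1 - k) = y then runCost f ℓ u k (i + 1) x else ⊤
    refine le_iInf fun u => ?_
    by_cases hy : traj f u k x (i + 1 - k) = y
    · rw [if_pos hy]
      refine iInf_le_of_le (traj f u k x (i - k)) ?_
      rw [runCost_split_back f ℓ u h x]
      have hc : f i (traj f u k x (i - k)) (u i) = y := by
        rw [← hy, h1]
        show f i (traj f u k x (i - k)) (u i)
          = f (k + (i - k)) (traj f u k x (i - k)) (u (k + (i - k)))
        rw [e]
      refine add_le_add (condV_le f ℓ k i x u) ?_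
      rw [condV_onestep]
      exact iInf_le_of_le u (by rw [if_pos hc])
    · simp [hy]

end helpers

/-- With elements `a_k = V_{k→k+1}` (and `a_T = V_T`), the right fold
`a_k ⊗ ⋯ ⊗ a_T` equals the value function `V_k`, and the left fold
`a_S ⊗ ⋯ ⊗ a_{k-1}` equals the conditional value function `V_{S→k}`. -/
theorem stmt4 {X U : Type*} [Fintype X] [Fintype U] [Nonempty U]
    (f : ℕ → X → U → X) (ℓ : ℕ → X → U → ℝ≥0∞) (ℓT : X → ℝ≥0∞) (T S : ℕ) :
    (∀ n, n ≤ T → ∀ x y : X, rfold f ℓ ℓT T n x y = Vval f ℓ ℓT T (T - n) x) ∧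
    (∀ n, S + n < T → ∀ x y : X,
      lfold f ℓ ℓT T S n x y = condV f ℓ S (S + n + 1) x y) := by
  constructor
  · intro n
    induction n with
    | zero =>
      intro _ x y
      show elem f ℓ ℓT T T x y = Vval f ℓ ℓT T (T - 0) x
      simp [elem, Vval_T]
    | succ n ih =>
      intro hn x y
      have hlt : T - (n + 1) < T := by omega
      have he : T - (n + 1) + 1 = T - n := by omega
      show dpOp (elem f ℓ ℓT T (T - (n + 1))) (rfold f ℓ ℓT T n) x y = _
      unfold dpOp
      rw [Vval_bellman f ℓ ℓT hlt x]
      refine iInf_congr fun z => ?_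
      simp only [elem, if_neg (show T - (n + 1) ≠ T by omega)]
      rw [ih (by omega) z y, he]
  · intro n
    induction n with
    | zero =>
      intro hn x y
      show elem f ℓ ℓT T S x y = condV f ℓ S (S + 1) x y
      simp [elem, show S ≠ T by omega]
    | succ n ih =>
      intro hn x y
      show dpOp (lfold f ℓ ℓT T S n) (elem f ℓ ℓT T (S + n + 1)) x y
        = condV f ℓ S ((S + n + 1) + 1) x y
      unfold dpOp
      rw [condV_split_back f ℓ (show S ≤ S + n + 1 by omega) x y]
      refine iInf_congr fun z => ?_
      rw [ih (by omega) x z]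
      simp only [elem, if_neg (show S + n + 1 ≠ T by omega)]
end

section
/- With S₊ ⪰ 0 symmetric n×n, U ≻ 0 symmetric m×m, F an n×n matrix, L an n×m matrix, and K = (Lᵀ S₊ L + U)⁻¹ Lᵀ S₊ F, the identity Fᵀ (I + S₊ L U⁻¹ Lᵀ)⁻¹ S₊ F = Fᵀ S₊ (F − L K) holds, i.e. both sides equal Fᵀ S₊ F − Fᵀ S₊ L (Lᵀ S₊ L + U)⁻¹ Lᵀ S₊ F. -/
open Matrix

/-- Riccati identity for the parallel LQT scan matrix: with `S₊ ⪰ 0`, `U ≻ 0`,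
and `K = (Lᵀ S₊ L + U)⁻¹ Lᵀ S₊ F`, we have
`Fᵀ (I + S₊ L U⁻¹ Lᵀ)⁻¹ S₊ F = Fᵀ S₊ (F − L K)
  = Fᵀ S₊ F − Fᵀ S₊ L (Lᵀ S₊ L + U)⁻¹ Lᵀ S₊ F`. -/
theorem stmt9 {n m : ℕ} (Splus F : Matrix (Fin n) (Fin n) ℝ)
    (L : Matrix (Fin n) (Fin m) ℝ) (U : Matrix (Fin m) (Fin m) ℝ)
    (hS : Splus.PosSemidef) (hU : U.PosDef) :
    Fᵀ * (1 + Splus * L * U⁻¹ * Lᵀ)⁻¹ * Splus * F =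
      Fᵀ * Splus * (F - L * ((Lᵀ * Splus * L + U)⁻¹ * Lᵀ * Splus * F)) ∧
    Fᵀ * (1 + Splus * L * U⁻¹ * Lᵀ)⁻¹ * Splus * F =
      Fᵀ * Splus * F - Fᵀ * Splus * L * (Lᵀ * Splus * L + U)⁻¹ * Lᵀ * Splus * F := by
  set S := Splus
  set M := Lᵀ * S * L + U with hMdef
  have hLSL : (Lᵀ * S * L).PosSemidef := by
    have := hS.conjTranspose_mul_mul_same L
    simpa [conjTranspose_eq_transpose_of_trivial] using this
  have hM : M.PosDef := Matrix.PosDef.posSemidef_add hLSL hU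
  have hMu : IsUnit M.det := hM.det_pos.ne'.isUnit
  have hUu : IsUnit U.det := hU.det_pos.ne'.isUnit
  have hMinv : M * M⁻¹ = 1 := mul_nonsing_inv _ hMu
  have hUinv : U⁻¹ * U = 1 := nonsing_inv_mul _ hUu
  -- key: (1 + S L U⁻¹ Lᵀ) * (1 - S L M⁻¹ Lᵀ) = 1
  have key : (1 + S * L * U⁻¹ * Lᵀ) * (1 - S * L * M⁻¹ * Lᵀ) = 1 := by
    have h1 : U⁻¹ * (Lᵀ * S * L) = U⁻¹ * M - 1 := by
      rw [hMdef, Matrix.mul_add, hUinv, add_sub_cancel_right]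
    calc (1 + S * L * U⁻¹ * Lᵀ) * (1 - S * L * M⁻¹ * Lᵀ)
        = 1 - S * L * M⁻¹ * Lᵀ + S * L * U⁻¹ * Lᵀ
            - S * L * (U⁻¹ * (Lᵀ * S * L)) * (M⁻¹ * Lᵀ) := by
          simp only [Matrix.mul_sub, Matrix.sub_mul, Matrix.add_mul, Matrix.one_mul,
            Matrix.mul_one, Matrix.mul_assoc]
          abel
      _ = 1 := by
          have hMinv' : M * (M⁻¹ * Lᵀ) = Lᵀ := by
            rw [← Matrix.mul_assoc, hMinv, Matrix.one_mul]
          rw [h1]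
          simp only [Matrix.sub_mul, Matrix.mul_sub, Matrix.one_mul, Matrix.mul_one,
            Matrix.mul_assoc, ← hMdef, hMinv']
          abel
  have hAinv : (1 + S * L * U⁻¹ * Lᵀ)⁻¹ = 1 - S * L * M⁻¹ * Lᵀ :=
    inv_eq_right_inv key
  constructor <;>
  · rw [hAinv]
    simp only [Matrix.sub_mul, Matrix.mul_sub, Matrix.one_mul, Matrix.mul_one,
      Matrix.mul_assoc]
end

section
/- Closedness of the dual parameterization under combination: given parameters (A₁, b₁, C₁, η₁, J₁) and (A₂, b₂, C₂, η₂, J₂) with C₁, C₂, J₁, J₂ symmetric positive semidefinite and I + C₁ J₂ invertible, the combined parameters defined by A = A₂(I + C₁J₂)⁻¹A₁, b = A₂(I + C₁J₂)⁻¹(b₁ + C₁η₂) + b₂, C = A₂(I + C₁J₂)⁻¹C₁A₂ᵀ + C₂, η = A₁ᵀ(I + J₂C₁)⁻¹(η₂ − J₂b₁) + η₁, J = A₁ᵀ(I + J₂C₁)⁻¹J₂A₁ + J₁ again yield symmetric positive semidefinite C and J. -/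
open Matrix

lemma aux_psd {n : ℕ} (C J : Matrix (Fin n) (Fin n) ℝ)
    (hC : C.PosSemidef) (hJ : J.PosSemidef) (hinv : IsUnit (1 + C * J)) :
    ((1 + C * J)⁻¹ * C).PosSemidef := by
  have hdet : IsUnit (1 + C * J).det := (Matrix.isUnit_iff_isUnit_det _).1 hinv
  have hdet' : IsUnit (1 + J * C).det := by
    rwa [← Matrix.det_one_add_mul_comm]
  have hTt : (1 + C * J)ᵀ = 1 + J * C := by
    have hCt : Cᵀ = C := by
      rw [← conjTranspose_eq_transpose_of_trivial, hC.1.eq]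
    have hJt : Jᵀ = J := by
      rw [← conjTranspose_eq_transpose_of_trivial, hJ.1.eq]
    rw [transpose_add, transpose_one, transpose_mul, hCt, hJt]
  have hBt : ((1 + C * J)⁻¹)ᵀ = (1 + J * C)⁻¹ := by
    rw [Matrix.transpose_nonsing_inv, hTt]
  have key : (1 + C * J)⁻¹ * C
      = (1 + C * J)⁻¹ * (C + C * J * C) * ((1 + C * J)⁻¹)ᵀ := by
    have h1 : C + C * J * C = C * (1 + J * C) := by
      rw [mul_add, mul_one, ← mul_assoc]
    rw [hBt, h1, ← mul_assoc, mul_assoc _ (1 + J * C),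
      Matrix.mul_nonsing_inv _ hdet', mul_one]
  have hN : (C + C * J * C).PosSemidef := by
    have h2 := hJ.conjTranspose_mul_mul_same C
    rw [hC.1.eq] at h2
    exact hC.add h2
  rw [key]
  have := hN.mul_mul_conjTranspose_same ((1 + C * J)⁻¹)
  rwa [conjTranspose_eq_transpose_of_trivial] at this

/-- Closedness of the dual parameterization under the LQT combination rule: if
`C₁, C₂, J₁, J₂` are symmetric PSD and `I + C₁ J₂` is invertible, then the combined
parameters `C = A₂(I + C₁J₂)⁻¹C₁A₂ᵀ + C₂` and `J = A₁ᵀ(I + J₂C₁)⁻¹J₂A₁ + J₁`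
are again symmetric positive semidefinite. -/
theorem stmt13 {n : ℕ}
    (A₁ A₂ C₁ C₂ J₁ J₂ : Matrix (Fin n) (Fin n) ℝ) (b₁ b₂ η₁ η₂ : Fin n → ℝ)
    (hC₁ : C₁.PosSemidef) (hC₂ : C₂.PosSemidef)
    (hJ₁ : J₁.PosSemidef) (hJ₂ : J₂.PosSemidef)
    (hinv : IsUnit (1 + C₁ * J₂)) :
    (A₂ * (1 + C₁ * J₂)⁻¹ * C₁ * A₂ᵀ + C₂).PosSemidef ∧
    (A₁ᵀ * (1 + J₂ * C₁)⁻¹ * J₂ * A₁ + J₁).PosSemidef := by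
  have hinv' : IsUnit (1 + J₂ * C₁) := by
    rw [Matrix.isUnit_iff_isUnit_det] at *
    rwa [← Matrix.det_one_add_mul_comm]
  have hM₁ := aux_psd C₁ J₂ hC₁ hJ₂ hinv
  have hM₂ := aux_psd J₂ C₁ hJ₂ hC₁ hinv'
  constructor
  · have h := hM₁.mul_mul_conjTranspose_same A₂
    rw [conjTranspose_eq_transpose_of_trivial] at h
    have he : A₂ * (1 + C₁ * J₂)⁻¹ * C₁ * A₂ᵀ
        = A₂ * ((1 + C₁ * J₂)⁻¹ * C₁) * A₂ᵀ := by
      rw [mul_assoc A₂]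
    rw [he]
    exact h.add hC₂
  · have h := hM₂.conjTranspose_mul_mul_same A₁
    rw [conjTranspose_eq_transpose_of_trivial] at h
    have he : A₁ᵀ * (1 + J₂ * C₁)⁻¹ * J₂ * A₁
        = A₁ᵀ * ((1 + J₂ * C₁)⁻¹ * J₂) * A₁ := by
      rw [mul_assoc A₁ᵀ]
    rw [he]
    exact h.add hJ₁
end

section
/- The minimum in the trajectory-recovery formula: given S ⪰ 0 symmetric with S invertible, v ∈ ℝⁿ, and a conditional value function V(x_k) = sup_λ [−½ λᵀ C λ − λᵀ(x_k − a)] with C ⪰ 0 symmetric and a ∈ ℝⁿ fixed, the minimizer over x_k of V(x_k) + ½ x_kᵀ S x_k − vᵀ x_k is x* = (I + C S)⁻¹ (a + C v). -/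
open scoped Matrix

/-
The point `x* = (I + CS)⁻¹(a + Cv)` comes with the dual vector `λ* = S x* - v`, which satisfies
`C λ* = a - x*`. The concave quadratic `λ ↦ -½ λᵀCλ - λᵀ(x* - a)` is stationary, hence maximal,
at `λ*`, so `V(x*)` is attained there; and `x ↦ ½ xᵀSx - (v + λ*)ᵀx` is stationary, hence minimal,
at `x*`. Together with `V(x) ≥ -½ λ*ᵀCλ* - λ*ᵀ(x - a)` this gives the inequality. Invertibility
of `I + CS` only needs `S, C ⪰ 0`: if `y + CSy = 0` then `yᵀSy = -(Sy)ᵀC(Sy) ≤ 0`, so `Sy = 0`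
and `y = -CSy = 0`.
-/

namespace Matrix

variable {ι : Type*} [Fintype ι]

lemma IsHermitian.dotProduct_mulVec_comm {A : Matrix ι ι ℝ} (hA : A.IsHermitian)
    (u w : ι → ℝ) : u ⬝ᵥ A *ᵥ w = w ⬝ᵥ A *ᵥ u := by
  rw [dotProduct_mulVec, ← mulVec_transpose, ← conjTranspose_eq_transpose_of_trivial, hA.eq,
    dotProduct_comm]

lemma PosSemidef.dotProduct_mulVec_self_nonneg {A : Matrix ι ι ℝ} (hA : A.PosSemidef)
    (x : ι → ℝ) : 0 ≤ x ⬝ᵥ A *ᵥ x := by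
  simpa using hA.dotProduct_mulVec_nonneg x

lemma PosSemidef.half_quadForm_sub_le_of_mulVec_eq {A : Matrix ι ι ℝ} (hA : A.PosSemidef)
    {x₀ b : ι → ℝ} (hx₀ : A *ᵥ x₀ = b) (x : ι → ℝ) :
    1 / 2 * (x₀ ⬝ᵥ A *ᵥ x₀) - b ⬝ᵥ x₀ ≤ 1 / 2 * (x ⬝ᵥ A *ᵥ x) - b ⬝ᵥ x := by
  subst hx₀
  have hgap := hA.dotProduct_mulVec_self_nonneg (x - x₀)
  have hsymm := hA.isHermitian.dotProduct_mulVec_comm x x₀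
  simp only [mulVec_sub, dotProduct_sub, sub_dotProduct] at hgap
  rw [dotProduct_comm (A *ᵥ x₀) x₀, dotProduct_comm (A *ᵥ x₀) x]
  linarith

lemma isUnit_one_add_mul_of_posSemidef [DecidableEq ι] {C S : Matrix ι ι ℝ}
    (hC : C.PosSemidef) (hS : S.PosSemidef) : IsUnit (1 + C * S) := by
  rw [← mulVec_injective_iff_isUnit]
  refine (injective_iff_map_eq_zero (mulVecLin (1 + C * S))).mpr fun y hy ↦ ?_
  rw [mulVecLin_apply, add_mulVec, one_mulVec, ← mulVec_mulVec, add_eq_zero_iff_eq_neg] at hy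
  have hSy : y ⬝ᵥ S *ᵥ y = -((S *ᵥ y) ⬝ᵥ C *ᵥ (S *ᵥ y)) := by
    nth_rewrite 1 [hy]
    rw [neg_dotProduct, dotProduct_comm]
  have hSy_zero : S *ᵥ y = 0 := (hS.dotProduct_mulVec_zero_iff y).mp <| by
    simpa using le_antisymm (hSy ▸ neg_nonpos.mpr (hC.dotProduct_mulVec_self_nonneg _))
      (hS.dotProduct_mulVec_self_nonneg y)
  rw [hy, hSy_zero, mulVec_zero, neg_zero]

lemma PosSemidef.iSup_neg_half_quadForm_sub_eq {C : Matrix ι ι ℝ} (hC : C.PosSemidef)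
    {l₀ w : ι → ℝ} (hl₀ : C *ᵥ l₀ = -w) :
    ⨆ l : ι → ℝ, ((-(1 / 2) * (l ⬝ᵥ C *ᵥ l) - l ⬝ᵥ w : ℝ) : EReal)
      = ((-(1 / 2) * (l₀ ⬝ᵥ C *ᵥ l₀) - l₀ ⬝ᵥ w : ℝ) : EReal) := by
  refine le_antisymm (iSup_le fun l ↦ EReal.coe_le_coe_iff.mpr ?_) (le_iSup_of_le l₀ le_rfl)
  have := hC.half_quadForm_sub_le_of_mulVec_eq hl₀ l
  rw [neg_dotProduct, neg_dotProduct, dotProduct_comm w, dotProduct_comm w] at this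
  linarith

end Matrix

open Matrix in
theorem stmt15_general {n : ℕ} (S C : Matrix (Fin n) (Fin n) ℝ) (a v : Fin n → ℝ)
    (hS : S.PosSemidef) (hC : C.PosSemidef) :
    ∀ x : Fin n → ℝ,
      (⨆ l : Fin n → ℝ,
          ((-(1 / 2) * (l ⬝ᵥ C *ᵥ l) - l ⬝ᵥ ((1 + C * S)⁻¹ *ᵥ (a + C *ᵥ v) - a) : ℝ) : EReal))
        + (((1 / 2) * ((1 + C * S)⁻¹ *ᵥ (a + C *ᵥ v) ⬝ᵥ S *ᵥ ((1 + C * S)⁻¹ *ᵥ (a + C *ᵥ v)))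
            - v ⬝ᵥ (1 + C * S)⁻¹ *ᵥ (a + C *ᵥ v) : ℝ) : EReal)
      ≤ (⨆ l : Fin n → ℝ, ((-(1 / 2) * (l ⬝ᵥ C *ᵥ l) - l ⬝ᵥ (x - a) : ℝ) : EReal))
        + (((1 / 2) * (x ⬝ᵥ S *ᵥ x) - v ⬝ᵥ x : ℝ) : EReal) := by
  intro x
  set xs := (1 + C * S)⁻¹ *ᵥ (a + C *ᵥ v)
  have hxs : xs + C *ᵥ (S *ᵥ xs) = a + C *ᵥ v := by
    have hdet := (isUnit_iff_isUnit_det _).mp (isUnit_one_add_mul_of_posSemidef hC hS)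
    have hM : (1 + C * S) *ᵥ xs = a + C *ᵥ v := by
      rw [mulVec_mulVec, mul_nonsing_inv _ hdet, one_mulVec]
    rwa [add_mulVec, one_mulVec, ← mulVec_mulVec] at hM
  set l₀ := S *ᵥ xs - v
  have hl₀ : C *ᵥ l₀ = -(xs - a) := by
    rw [mulVec_sub, neg_sub]
    linear_combination hxs
  rw [hC.iSup_neg_half_quadForm_sub_eq hl₀]
  have hmin := hS.half_quadForm_sub_le_of_mulVec_eq (x₀ := xs) (b := v + l₀) (by simp [l₀]) x
  calc _ ≤ (((-(1 / 2) * (l₀ ⬝ᵥ C *ᵥ l₀) - l₀ ⬝ᵥ (x - a) : ℝ) : EReal))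
          + (((1 / 2) * (x ⬝ᵥ S *ᵥ x) - v ⬝ᵥ x : ℝ) : EReal) := by
        rw [← EReal.coe_add, ← EReal.coe_add, EReal.coe_le_coe_iff]
        simp only [add_dotProduct, dotProduct_sub] at hmin ⊢
        linarith
    _ ≤ _ := by gcongr; exact le_iSup_of_le l₀ le_rfl

/-- Trajectory-recovery minimizer: with `S ⪰ 0` symmetric and invertible, `C ⪰ 0`
symmetric, and `V(x) = sup_λ [−½ λᵀ C λ − λᵀ(x − a)]`, the point
`x* = (I + CS)⁻¹(a + Cv)` minimizes `x ↦ V(x) + ½ xᵀ S x − vᵀ x`. -/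
theorem stmt15 {n : ℕ} (S C : Matrix (Fin n) (Fin n) ℝ) (a v : Fin n → ℝ)
    (hS : S.PosSemidef) (hSinv : IsUnit S) (hC : C.PosSemidef) :
    ∀ x : Fin n → ℝ,
      (⨆ l : Fin n → ℝ,
          ((-(1 / 2) * (l ⬝ᵥ C *ᵥ l) - l ⬝ᵥ ((1 + C * S)⁻¹ *ᵥ (a + C *ᵥ v) - a) : ℝ) : EReal))
        + (((1 / 2) * ((1 + C * S)⁻¹ *ᵥ (a + C *ᵥ v) ⬝ᵥ S *ᵥ ((1 + C * S)⁻¹ *ᵥ (a + C *ᵥ v)))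
            - v ⬝ᵥ (1 + C * S)⁻¹ *ᵥ (a + C *ᵥ v) : ℝ) : EReal)
      ≤ (⨆ l : Fin n → ℝ, ((-(1 / 2) * (l ⬝ᵥ C *ᵥ l) - l ⬝ᵥ (x - a) : ℝ) : EReal))
        + (((1 / 2) * (x ⬝ᵥ S *ᵥ x) - v ⬝ᵥ x : ℝ) : EReal) :=
  stmt15_general S C a v hS hC
end
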